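/- arXiv:1201.4469 — 3 statements merged into one kernel-verified Lean document; each statement's English description precedes it below -/
import Mathlib

section
/- Let δ be a metric on M. Then the following are equivalent: (i) for every measure ν ∈ M with Fourier coefficients c_k = c_k(ν), k = 0,1,2,…, and every sequence of positive reals ε_n → 0, the diameter ρ_δ(F_{c_{0:n},ε_n}) tends to 0 as n → ∞; (ii) δ is weakly continuous. -/
open MeasureTheory Complex Filter Topology
open scoped ENNReal

noncomputable section

instance : Fact (0 < 2 * Real.pi) := ⟨by positivity⟩

/-- The unit circle `𝕋`, identified with `(−π,π]`, formalized as `ℝ / 2πℤ`. -/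
abbrev UnitCirc : Type := AddCircle (2 * Real.pi)

/-- `M`: the space of finite nonnegative Borel measures on `𝕋`, equipped with
the topology of weak convergence. -/
abbrev MSp : Type := MeasureTheory.FiniteMeasure UnitCirc

/-- The `k`-th Fourier coefficient (covariance) `c_k(μ) = (1/2π) ∫ e^{−ikθ} dμ(θ)`. -/
def covCoeff (μ : MSp) (k : ℕ) : ℂ :=
  ((2 * Real.pi : ℝ) : ℂ)⁻¹ * ∫ θ, fourier (-(k : ℤ)) θ ∂(μ : Measure UnitCirc)

/-- The uncertainty set `F_{c_{0:n}, ε}`. -/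
def FsetEps (n : ℕ) (c : ℕ → ℂ) (ε : ℝ) : Set MSp :=
  {μ | ∀ k ≤ n, ‖c k - covCoeff μ k‖ < ε}

/-- The diameter `ρ_δ(F)` of a set of measures, valued in `[0,∞]`. -/
def diamE (δ : MSp → MSp → ℝ) (F : Set MSp) : ℝ≥0∞ :=
  ⨆ μ0 ∈ F, ⨆ μ1 ∈ F, ENNReal.ofReal (δ μ0 μ1)

/-! The zeroth Fourier coefficient is the mass, so measures whose coefficients converge have
bounded mass; integration against measures of bounded mass is an equicontinuous family on
`C(𝕋, ℂ)`, and trigonometric polynomials are dense there, so convergence of all coefficients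
is weak convergence. Hence the open sets `F_{c_{0:n},ε_n}` shrink to `ν` in the weak topology.
If `δ` is weakly continuous, continuity at `(ν, ν)` makes their diameters small. Conversely,
small diameters of these neighbourhoods make `δ μ ρ` and `δ ρ μ` small for `ρ` weakly near `μ`,
and the triangle inequality turns this into joint continuity. -/

namespace MeasureTheory.FiniteMeasure

variable {X : Type*} [TopologicalSpace X] [CompactSpace X] [MeasurableSpace X]
  [OpensMeasurableSpace X] {𝕜 : Type*} [RCLike 𝕜]

lemma integrable_continuousMap (f : C(X, 𝕜)) (μ : FiniteMeasure X) :
    Integrable f (μ : Measure X) :=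
  (BoundedContinuousFunction.mkOfCompact f).integrable (μ : Measure X)

lemma lipschitzWith_integral_continuousMap (μ : FiniteMeasure X) :
    LipschitzWith μ.mass fun f : C(X, 𝕜) => ∫ x, f x ∂μ := by
  refine LipschitzWith.of_dist_le_mul fun f g => ?_
  rw [dist_eq_norm, ← integral_sub (integrable_continuousMap f μ) (integrable_continuousMap g μ),
    dist_eq_norm, mul_comm]
  refine (norm_integral_le_of_norm_le_const (Eventually.of_forall fun x =>
    (f - g).norm_coe_le_norm x)).trans_eq ?_
  simp only [Measure.real, ← ennreal_coeFn_eq_coeFn_toMeasure, mass, ENNReal.coe_toReal]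

variable {ι : Type*} {l : Filter ι} {μs : ι → FiniteMeasure X} {ν : FiniteMeasure X}

lemma tendsto_integral_of_mem_span {s : Set C(X, 𝕜)}
    (h : ∀ f ∈ s, Tendsto (fun i => ∫ x, f x ∂μs i) l (𝓝 (∫ x, f x ∂ν))) :
    ∀ f ∈ Submodule.span 𝕜 s, Tendsto (fun i => ∫ x, f x ∂μs i) l (𝓝 (∫ x, f x ∂ν)) := by
  intro f hf
  induction hf using Submodule.span_induction with
  | mem f hf => exact h f hf
  | zero => simpa using tendsto_const_nhds
  | add f g _ _ hf hg =>
    simpa only [ContinuousMap.add_apply,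
      integral_add (integrable_continuousMap f _) (integrable_continuousMap g _)] using hf.add hg
  | smul c f _ hf =>
    simpa only [ContinuousMap.smul_apply, integral_smul] using hf.const_smul c

lemma tendsto_of_tendsto_integral_of_dense_span {s : Set C(X, 𝕜)}
    (hs : (Submodule.span 𝕜 s).topologicalClosure = ⊤)
    (hmass : BddAbove (Set.range fun i => (μs i).mass))
    (h : ∀ f ∈ s, Tendsto (fun i => ∫ x, f x ∂μs i) l (𝓝 (∫ x, f x ∂ν))) :
    Tendsto μs l (𝓝 ν) := by
  obtain ⟨K, hK⟩ := hmass
  have hequi : Equicontinuous fun i (f : C(X, 𝕜)) => ∫ x, f x ∂μs i :=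
    (LipschitzWith.uniformEquicontinuous _ K fun i =>
      (lipschitzWith_integral_continuousMap (μs i)).weaken (hK ⟨i, rfl⟩)).equicontinuous
  have hclosed :
      IsClosed {f : C(X, 𝕜) | Tendsto (fun i => ∫ x, f x ∂μs i) l (𝓝 (∫ x, f x ∂ν))} :=
    hequi.isClosed_setOfPred_tendsto (lipschitzWith_integral_continuousMap ν).continuous
  have hall : ∀ f : C(X, 𝕜), Tendsto (fun i => ∫ x, f x ∂μs i) l (𝓝 (∫ x, f x ∂ν)) := by
    intro f
    have hf : f ∈ ((Submodule.span 𝕜 s).topologicalClosure : Set C(X, 𝕜)) := by simp [hs]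
    exact closure_minimal (tendsto_integral_of_mem_span h) hclosed hf
  exact (tendsto_iff_forall_integral_rclike_tendsto 𝕜).2 fun f => hall f.toContinuousMap

lemma integral_fourier_neg {T : ℝ} (μ : Measure (AddCircle T)) (n : ℤ) :
    ∫ x, fourier (-n) x ∂μ = starRingEnd ℂ (∫ x, fourier n x ∂μ) := by
  simp only [fourier_neg, integral_conj]

lemma tendsto_of_tendsto_integral_fourier {T : ℝ} [Fact (0 < T)]
    {μs : ℕ → FiniteMeasure (AddCircle T)} {ν : FiniteMeasure (AddCircle T)}
    (h : ∀ k : ℕ, Tendsto (fun j => ∫ x, fourier (-k) x ∂(μs j : Measure (AddCircle T))) atTop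
      (𝓝 (∫ x, fourier (-k) x ∂(ν : Measure (AddCircle T))))) :
    Tendsto μs atTop (𝓝 ν) := by
  have hfourier : ∀ n : ℤ, Tendsto (fun j => ∫ x, fourier n x ∂(μs j : Measure (AddCircle T)))
      atTop (𝓝 (∫ x, fourier n x ∂(ν : Measure (AddCircle T)))) := by
    intro n
    obtain ⟨k, rfl | rfl⟩ := Int.eq_nat_or_neg n
    · simpa only [Function.comp_def, ← integral_fourier_neg, neg_neg]
        using (continuous_conj.tendsto _).comp (h k)
    · exact h k
  have hmass : Tendsto (fun j => ((μs j).mass : ℂ)) atTop (𝓝 (ν.mass : ℂ)) := by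
    simpa [fourier_zero] using hfourier 0
  refine tendsto_of_tendsto_integral_of_dense_span span_fourier_closure_eq_top ?_
    (Set.forall_mem_range.2 hfourier)
  exact (NNReal.tendsto_coe.1 (tendsto_ofReal_iff.1 hmass)).bddAbove_range

end MeasureTheory.FiniteMeasure

lemma continuous_covCoeff (k : ℕ) : Continuous fun μ : MSp => covCoeff μ k :=
  continuous_const.mul <| continuous_iff_continuousAt.2 fun _ =>
    (FiniteMeasure.tendsto_iff_forall_integral_rclike_tendsto ℂ).1 tendsto_id
      (BoundedContinuousFunction.mkOfCompact (fourier _))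

lemma isOpen_FsetEps (n : ℕ) (c : ℕ → ℂ) (ε : ℝ) : IsOpen (FsetEps n c ε) := by
  simp only [FsetEps, ← Set.mem_Iic (b := n), Set.ofPred_forall]
  exact (Set.finite_Iic n).isOpen_biInter fun k _ =>
    isOpen_lt (continuous_const.sub (continuous_covCoeff k)).norm continuous_const

lemma mem_FsetEps_self (ν : MSp) (n : ℕ) {ε : ℝ} (hε : 0 < ε) : ν ∈ FsetEps n (covCoeff ν) ε :=
  fun _ _ => by simpa using hε

lemma tendsto_of_forall_mem_FsetEps {ν : MSp} {ε : ℕ → ℝ} (hε : Tendsto ε atTop (𝓝 0))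
    {μ : ℕ → MSp} (hμ : ∀ n, μ n ∈ FsetEps n (covCoeff ν) (ε n)) :
    Tendsto μ atTop (𝓝 ν) := by
  refine FiniteMeasure.tendsto_of_tendsto_integral_fourier fun k => ?_
  have hcov : Tendsto (fun n => covCoeff (μ n) k) atTop (𝓝 (covCoeff ν k)) := by
    rw [tendsto_iff_norm_sub_tendsto_zero]
    refine squeeze_zero_norm' ?_ hε
    filter_upwards [eventually_ge_atTop k] with n hn
    rw [norm_norm, norm_sub_rev]
    exact (hμ n k hn).le
  have h2π : ((2 * Real.pi : ℝ) : ℂ) ≠ 0 := by simp [Real.pi_ne_zero]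
  simpa only [covCoeff, mul_inv_cancel_left₀ h2π] using hcov.const_mul ((2 * Real.pi : ℝ) : ℂ)

lemma tendsto_FsetEps_smallSets {ν : MSp} {ε : ℕ → ℝ} (hε₀ : ∀ n, 0 < ε n)
    (hε : Tendsto ε atTop (𝓝 0)) :
    Tendsto (fun n => FsetEps n (covCoeff ν) (ε n)) atTop (𝓝 ν).smallSets := by
  refine tendsto_smallSets_iff.2 fun U hU => ?_
  -- pick `μ n ∈ F n \ U` whenever `F n ⊄ U`: this sequence still converges to `ν`
  have hwitness : ∀ n, ∃ μ ∈ FsetEps n (covCoeff ν) (ε n),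
      μ ∈ U → FsetEps n (covCoeff ν) (ε n) ⊆ U := by
    intro n
    by_cases hsub : FsetEps n (covCoeff ν) (ε n) ⊆ U
    · exact ⟨ν, mem_FsetEps_self ν n (hε₀ n), fun _ => hsub⟩
    · obtain ⟨μ, hμ, hμU⟩ := Set.not_subset.1 hsub
      exact ⟨μ, hμ, fun h => absurd h hμU⟩
  choose μ hμ hμU using hwitness
  exact ((tendsto_of_forall_mem_FsetEps hε hμ).eventually hU).mono hμU

section Diameter

variable {δ : MSp → MSp → ℝ} {F : Set MSp}

lemma lt_of_diamE_lt {μ0 μ1 : MSp} (h0 : μ0 ∈ F) (h1 : μ1 ∈ F) {r : ℝ}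
    (hF : diamE δ F < ENNReal.ofReal r) : δ μ0 μ1 < r := by
  have hle : ENNReal.ofReal (δ μ0 μ1) ≤ diamE δ F :=
    le_iSup₂_of_le μ0 h0 (le_iSup₂_of_le μ1 h1 le_rfl)
  exact (ENNReal.ofReal_lt_ofReal_iff'.1 (hle.trans_lt hF)).1

lemma diamE_le_ofReal {r : ℝ} (h : ∀ μ0 ∈ F, ∀ μ1 ∈ F, δ μ0 μ1 ≤ r) :
    diamE δ F ≤ ENNReal.ofReal r :=
  iSup₂_le fun μ0 h0 => iSup₂_le fun μ1 h1 => ENNReal.ofReal_le_ofReal (h μ0 h0 μ1 h1)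

lemma eventually_lt_of_tendsto_diamE {ι : Type*} {l : Filter ι} [l.NeBot] {F : ι → Set MSp}
    {μ : MSp} (hF : ∀ i, F i ∈ 𝓝 μ) (hdiam : Tendsto (fun i => diamE δ (F i)) l (𝓝 0))
    {r : ℝ} (hr : 0 < r) : ∀ᶠ ρ in 𝓝 μ, δ μ ρ < r ∧ δ ρ μ < r := by
  obtain ⟨i, hi⟩ := (hdiam.eventually_lt_const (ENNReal.ofReal_pos.2 hr)).exists
  filter_upwards [hF i] with ρ hρ
  exact ⟨lt_of_diamE_lt (mem_of_mem_nhds (hF i)) hρ hi,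
    lt_of_diamE_lt hρ (mem_of_mem_nhds (hF i)) hi⟩

lemma tendsto_diamE_zero {ι : Type*} {l : Filter ι} {F : ι → Set MSp} {ν : MSp}
    (hF : Tendsto F l (𝓝 ν).smallSets)
    (hδ : ContinuousAt (fun p : MSp × MSp => δ p.1 p.2) (ν, ν))
    (hνν : δ ν ν = 0) : Tendsto (fun i => diamE δ (F i)) l (𝓝 0) := by
  refine ENNReal.tendsto_nhds_zero.2 fun η hη => ?_
  obtain ⟨r, -, hr, hrη⟩ := ENNReal.lt_iff_exists_real_btwn.1 hη
  have hsmall : {p : MSp × MSp | δ p.1 p.2 < r} ∈ 𝓝 ν ×ˢ 𝓝 ν := by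
    rw [← nhds_prod_eq]
    exact hδ.eventually_lt continuousAt_const (by simpa [hνν] using hr)
  obtain ⟨U, hU, hUU⟩ := mem_prod_self_iff.1 hsmall
  filter_upwards [tendsto_smallSets_iff.1 hF U hU] with i hi
  exact (diamE_le_ofReal fun μ0 h0 μ1 h1 =>
    (hUU (Set.mk_mem_prod (hi h0) (hi h1))).le).trans hrη.le

end Diameter

lemma continuous_of_triangle_of_eventually_lt {X : Type*} [TopologicalSpace X] (d : X → X → ℝ)
    (htri : ∀ x y z, d x z ≤ d x y + d y z)
    (h : ∀ x, ∀ r > 0, ∀ᶠ y in 𝓝 x, d x y < r ∧ d y x < r) :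
    Continuous fun p : X × X => d p.1 p.2 := by
  refine continuous_iff_continuousAt.2 fun ⟨x, y⟩ =>
    tendsto_order.2 ⟨fun a ha => ?_, fun a ha => ?_⟩
  all_goals
    rw [nhds_prod_eq]
    filter_upwards [(h x _ (half_pos (sub_pos.2 ha))).prod_mk (h y _ (half_pos (sub_pos.2 ha)))]
      with ⟨x', y'⟩ ⟨⟨hx, hx'⟩, ⟨hy, hy'⟩⟩
  · linarith [htri x x' y, htri x' y' y]
  · linarith [htri x' x y', htri x y y']

theorem stmt0_general (δ : MSp → MSp → ℝ)
    (hm₀ : ∀ μ0 μ1 : MSp, δ μ0 μ1 = 0 ↔ μ0 = μ1)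
    (hm₂ : ∀ μ0 μ1 μ2 : MSp, δ μ0 μ2 ≤ δ μ0 μ1 + δ μ1 μ2) :
    (∀ ν : MSp, ∀ ε : ℕ → ℝ, (∀ n, 0 < ε n) → Tendsto ε atTop (nhds 0) →
        Tendsto (fun n => diamE δ (FsetEps n (covCoeff ν) (ε n))) atTop (nhds 0)) ↔
      Continuous (fun p : MSp × MSp => δ p.1 p.2) := by
  constructor
  · intro H
    refine continuous_of_triangle_of_eventually_lt δ hm₂ fun μ r hr => ?_
    have hε₀ : ∀ n : ℕ, 0 < 1 / ((n : ℝ) + 1) := fun n => Nat.one_div_pos_of_nat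
    exact eventually_lt_of_tendsto_diamE
      (fun n => (isOpen_FsetEps n _ _).mem_nhds (mem_FsetEps_self μ n (hε₀ n)))
      (H μ _ hε₀ tendsto_one_div_add_atTop_nhds_zero_nat) hr
  · intro hcont ν ε hε₀ hε
    exact tendsto_diamE_zero (tendsto_FsetEps_smallSets hε₀ hε) hcont.continuousAt
      ((hm₀ ν ν).2 rfl)

/-- For a metric `δ` on `M`, the diameter of the uncertainty sets
`F_{c_{0:n},ε_n}` tends to `0` (for every `ν ∈ M` and every positive `ε_n → 0`)
iff `δ` is weakly continuous. -/
theorem stmt0 (δ : MSp → MSp → ℝ)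
    (hm₀ : ∀ μ0 μ1 : MSp, δ μ0 μ1 = 0 ↔ μ0 = μ1)
    (hm₁ : ∀ μ0 μ1 : MSp, δ μ0 μ1 = δ μ1 μ0)
    (hm₂ : ∀ μ0 μ1 μ2 : MSp, δ μ0 μ2 ≤ δ μ0 μ1 + δ μ1 μ2) :
    (∀ ν : MSp, ∀ ε : ℕ → ℝ, (∀ n, 0 < ε n) → Tendsto ε atTop (nhds 0) →
        Tendsto (fun n => diamE δ (FsetEps n (covCoeff ν) (ε n))) atTop (nhds 0)) ↔
      Continuous (fun p : MSp × MSp => δ p.1 p.2) :=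
  stmt0_general δ hm₀ hm₂

end
end

section
/- Let g : 𝕋 → ℝ be a continuous function all of whose Fourier coefficients g_k = (1/2π)∫_{−π}^{π} g(θ) e^{−ikθ} dθ, k ∈ ℤ, are nonzero. Then δ_{smooth,g}(μ0,μ1) := sup_{ξ∈(−π,π]} |∫_{−π}^{π} g(ξ−θ) dμ0(θ) − ∫_{−π}^{π} g(ξ−θ) dμ1(θ)| (the supremum norm of the circular convolution g ∗ (μ0 − μ1)) is a weakly continuous metric on M. -/
open MeasureTheory Complex Filter Topology
open scoped ENNReal

noncomputable section

/-- The smoothing distance `δ_{smooth,g}(μ0,μ1) = ‖g ∗ (μ0 − μ1)‖_∞`, i.e. the supremum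
over `ξ ∈ 𝕋` of `|∫ g(ξ−θ) dμ0(θ) − ∫ g(ξ−θ) dμ1(θ)|`. -/
def deltaSmooth (g : C(UnitCirc, ℝ)) (μ0 μ1 : MSp) : ℝ :=
  ⨆ ξ : UnitCirc, |(∫ θ, g (ξ - θ) ∂(μ0 : Measure UnitCirc))
    - ∫ θ, g (ξ - θ) ∂(μ1 : Measure UnitCirc)|

/-!
Convolution with `g` maps a finite measure `μ` to the continuous function `g ∗ μ`, and
`δ_{smooth,g}` is the sup distance between such convolutions, so it is a pseudometric. Since
`𝕋` is compact, `(μ, f) ↦ ∫ f dμ` is jointly continuous on `M × C(𝕋)`, hence `μ ↦ g ∗ μ` is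
continuous from the weak topology to the uniform one, and so is the distance. Finally the `k`-th
Fourier coefficient of `g ∗ μ` is `ĝ(k) μ̂(k)`, so `ĝ(k) ≠ 0` makes `g ∗ μ` determine all Fourier
coefficients of `μ`; trigonometric polynomials being dense in `C(𝕋)`, these determine `μ`.
-/

section IntegralOnCompact

variable {X E : Type*} [TopologicalSpace X] [CompactSpace X] [MeasurableSpace X]
  [NormedAddCommGroup E]

lemma ContinuousMap.integrable [OpensMeasurableSpace X] (f : C(X, E)) (μ : Measure X)
    [IsFiniteMeasure μ] : Integrable f μ :=
  f.continuous.integrable_of_hasCompactSupport (HasCompactSupport.of_compactSpace _)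

lemma ContinuousMap.norm_integral_le_mul_norm [NormedSpace ℝ E] (f : C(X, E)) (μ : Measure X)
    [IsFiniteMeasure μ] : ‖∫ x, f x ∂μ‖ ≤ μ.real Set.univ * ‖f‖ := by
  rw [mul_comm]
  exact norm_integral_le_of_norm_le_const (Eventually.of_forall f.norm_coe_le_norm)

variable [OpensMeasurableSpace X] [NormedSpace ℝ E] (𝕜 : Type*) [RCLike 𝕜] [NormedSpace 𝕜 E]

def ContinuousMap.integralCLM (μ : Measure X) [IsFiniteMeasure μ] : C(X, E) →L[𝕜] E :=
  LinearMap.mkContinuous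
    { toFun := fun f => ∫ x, f x ∂μ
      map_add' := fun f h => integral_add (f.integrable μ) (h.integrable μ)
      map_smul' := fun c f => integral_smul c f }
    (μ.real Set.univ) (fun f => f.norm_integral_le_mul_norm μ)

@[simp]
lemma ContinuousMap.integralCLM_apply (μ : Measure X) [IsFiniteMeasure μ] (f : C(X, E)) :
    ContinuousMap.integralCLM 𝕜 μ f = ∫ x, f x ∂μ :=
  rfl

end IntegralOnCompact

namespace MeasureTheory.FiniteMeasure

lemma toReal_mass {X : Type*} [MeasurableSpace X] (μ : FiniteMeasure X) :
    (μ.mass : ℝ) = (μ : Measure X).real Set.univ := by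
  rw [Measure.real, ← ennreal_mass, ENNReal.coe_toReal]

lemma continuous_integral_continuousMap_prod {X : Type*} [TopologicalSpace X] [CompactSpace X]
    [MeasurableSpace X] [OpensMeasurableSpace X] :
    Continuous fun p : FiniteMeasure X × C(X, ℝ) => ∫ x, p.2 x ∂(p.1 : Measure X) := by
  refine continuous_iff_continuousAt.2 fun ⟨μ, f⟩ => tendsto_iff_dist_tendsto_zero.2 ?_
  have hbound : ∀ p : FiniteMeasure X × C(X, ℝ),
      dist (∫ x, p.2 x ∂(p.1 : Measure X)) (∫ x, f x ∂(μ : Measure X))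
        ≤ p.1.mass * dist p.2 f
          + dist (∫ x, f x ∂(p.1 : Measure X)) (∫ x, f x ∂(μ : Measure X)) := by
    rintro ⟨ν, h⟩
    refine (dist_triangle _ (∫ x, f x ∂(ν : Measure X)) _).trans (add_le_add ?_ le_rfl)
    rw [dist_eq_norm, dist_eq_norm, toReal_mass, ← ContinuousMap.integralCLM_apply ℝ,
      ← ContinuousMap.integralCLM_apply ℝ, ← map_sub]
    exact (h - f).norm_integral_le_mul_norm _
  have hcont : Continuous fun p : FiniteMeasure X × C(X, ℝ) => (p.1.mass : ℝ) * dist p.2 f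
      + dist (∫ x, f x ∂(p.1 : Measure X)) (∫ x, f x ∂(μ : Measure X)) :=
    (((NNReal.continuous_coe.comp continuous_mass).comp continuous_fst).mul
      (continuous_snd.dist continuous_const)).add
      (((continuous_integral_continuousMap f).comp continuous_fst).dist continuous_const)
  have hlim := hcont.tendsto (μ, f)
  simp only [dist_self, mul_zero, add_zero] at hlim
  exact squeeze_zero (fun _ => dist_nonneg) hbound hlim

end MeasureTheory.FiniteMeasure

section Convolution

variable {G : Type*} [AddCommGroup G] [TopologicalSpace G] [IsTopologicalAddGroup G]
  [CompactSpace G] [MeasurableSpace G] [OpensMeasurableSpace G]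

def convolutionMap (g : C(G, ℝ)) : C(FiniteMeasure G, C(G, ℝ)) :=
  ContinuousMap.curry
    { toFun := fun p => ∫ θ, g (p.2 - θ) ∂(p.1 : Measure G)
      continuous_toFun := by
        let translates : C(G, C(G, ℝ)) :=
          ContinuousMap.curry ⟨fun q : G × G => g (q.1 - q.2), by fun_prop⟩
        exact FiniteMeasure.continuous_integral_continuousMap_prod.comp
          (continuous_fst.prodMk (translates.continuous.comp continuous_snd)) }

@[simp]
lemma convolutionMap_apply (g : C(G, ℝ)) (μ : FiniteMeasure G) (ξ : G) :
    convolutionMap g μ ξ = ∫ θ, g (ξ - θ) ∂(μ : Measure G) :=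
  rfl

end Convolution

section Fourier

variable {T : ℝ} [Fact (0 < T)]

lemma fourierCoeff_integral_sub (g : C(AddCircle T, ℝ)) (μ : Measure (AddCircle T))
    [IsFiniteMeasure μ] (k : ℤ) :
    fourierCoeff (fun ξ => ((∫ θ, g (ξ - θ) ∂μ : ℝ) : ℂ)) k
      = fourierCoeff (fun θ => (g θ : ℂ)) k * ∫ θ, fourier (-k) θ ∂μ := by
  have hint : Integrable (Function.uncurry fun ξ θ : AddCircle T =>
      fourier (-k) ξ * (g (ξ - θ) : ℂ)) (AddCircle.haarAddCircle.prod μ) :=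
    ContinuousMap.integrable ⟨fun p : AddCircle T × AddCircle T =>
      fourier (-k) p.1 * (g (p.1 - p.2) : ℂ), by fun_prop⟩ _
  have htranslate : ∀ θ, ∫ ξ, fourier (-k) ξ * (g (ξ - θ) : ℂ) ∂AddCircle.haarAddCircle
      = fourier (-k) θ * fourierCoeff (fun θ => (g θ : ℂ)) k := by
    intro θ
    rw [← integral_add_right_eq_self _ θ, fourierCoeff, ← integral_const_mul]
    congr 1 with ξ
    simp only [add_sub_cancel_right, fourier_apply, zsmul_add, AddCircle.toCircle_add,
      Circle.coe_mul, smul_eq_mul]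
    ring
  calc fourierCoeff (fun ξ => ((∫ θ, g (ξ - θ) ∂μ : ℝ) : ℂ)) k
      = ∫ ξ, ∫ θ, fourier (-k) ξ * (g (ξ - θ) : ℂ) ∂μ ∂AddCircle.haarAddCircle := by
        simp only [fourierCoeff, smul_eq_mul, ← integral_complex_ofReal, integral_const_mul]
    _ = ∫ θ, fourier (-k) θ * fourierCoeff (fun θ => (g θ : ℂ)) k ∂μ := by
        simp only [integral_integral_swap hint, htranslate]
    _ = fourierCoeff (fun θ => (g θ : ℂ)) k * ∫ θ, fourier (-k) θ ∂μ := by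
        rw [integral_mul_const, mul_comm]

lemma MeasureTheory.FiniteMeasure.ext_of_integral_fourier_eq
    {μ ν : FiniteMeasure (AddCircle T)}
    (h : ∀ n : ℤ, ∫ x, fourier n x ∂(μ : Measure (AddCircle T))
      = ∫ x, fourier n x ∂(ν : Measure (AddCircle T))) : μ = ν := by
  have hdense : Dense (Submodule.span ℂ (Set.range (@fourier T)) : Set C(AddCircle T, ℂ)) :=
    Submodule.dense_iff_topologicalClosure_eq_top.2 span_fourier_closure_eq_top
  have hCLM : ContinuousMap.integralCLM ℂ (μ : Measure (AddCircle T))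
      = ContinuousMap.integralCLM ℂ (ν : Measure (AddCircle T)) :=
    ContinuousLinearMap.ext_on hdense (by rintro _ ⟨n, rfl⟩; exact h n)
  refine FiniteMeasure.ext_of_forall_integral_eq fun f => ?_
  have hf := congr($hCLM ⟨fun x => (f x : ℂ), by fun_prop⟩)
  simp only [ContinuousMap.integralCLM_apply, ContinuousMap.coe_mk,
    integral_complex_ofReal] at hf
  exact_mod_cast hf

lemma convolutionMap_injective {g : C(AddCircle T, ℝ)}
    (hg : ∀ k : ℤ, fourierCoeff (fun θ => (g θ : ℂ)) k ≠ 0) :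
    Function.Injective (convolutionMap g) := by
  intro μ ν hμν
  refine FiniteMeasure.ext_of_integral_fourier_eq fun n => mul_left_cancel₀ (hg (-n)) ?_
  have hcoeff :=
    congrArg (fun F : C(AddCircle T, ℝ) => fourierCoeff (fun ξ => (F ξ : ℂ)) (-n)) hμν
  simpa only [convolutionMap_apply, fourierCoeff_integral_sub, neg_neg] using hcoeff

end Fourier

lemma deltaSmooth_eq_dist (g : C(UnitCirc, ℝ)) (μ0 μ1 : MSp) :
    deltaSmooth g μ0 μ1 = dist (convolutionMap g μ0) (convolutionMap g μ1) := by
  simp only [ContinuousMap.dist_eq_iSup, convolutionMap_apply, Real.dist_eq, deltaSmooth]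

/-- If the continuous windowing function `g` has non-vanishing Fourier
coefficients `g_k = (1/2π)∫ g(θ)e^{−ikθ}dθ`, then `δ_{smooth,g}` is a weakly continuous
metric on `M`. -/
theorem stmt4 (g : C(UnitCirc, ℝ))
    (hg : ∀ k : ℤ, fourierCoeff (fun θ : UnitCirc => ((g θ : ℝ) : ℂ)) k ≠ 0) :
    (∀ μ0 μ1 : MSp, deltaSmooth g μ0 μ1 = 0 ↔ μ0 = μ1) ∧
    (∀ μ0 μ1 : MSp, deltaSmooth g μ0 μ1 = deltaSmooth g μ1 μ0) ∧
    (∀ μ0 μ1 μ2 : MSp, deltaSmooth g μ0 μ2 ≤ deltaSmooth g μ0 μ1 + deltaSmooth g μ1 μ2) ∧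
    Continuous (fun p : MSp × MSp => deltaSmooth g p.1 p.2) := by
  simp only [deltaSmooth_eq_dist]
  refine ⟨fun μ0 μ1 => dist_eq_zero.trans (convolutionMap_injective hg).eq_iff,
    fun μ0 μ1 => dist_comm _ _, fun μ0 μ1 μ2 => dist_triangle _ _ _, ?_⟩
  exact ((convolutionMap g).continuous.comp continuous_fst).dist
    ((convolutionMap g).continuous.comp continuous_snd)

end
end

section
/- Let ν ∈ M with Fourier coefficients c_k = c_k(ν), k = 0,1,2,…, and let g : 𝕋 → ℝ be continuous. Then sup{ |∫_𝕋 g dμ0 − ∫_𝕋 g dμ1| : μ0, μ1 ∈ F_{c_{0:n}} } → 0 as n → ∞. -/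
open MeasureTheory Complex Filter Topology
open scoped ENNReal
open scoped ComplexConjugate

noncomputable section

/-- The uncertainty set `F_{c_{0:n}}` (exact covariance matching). -/
def Fset (n : ℕ) (c : ℕ → ℂ) : Set MSp :=
  {μ | ∀ k ≤ n, covCoeff μ k = c k}

lemma cont_integrable (μ : MSp) (f : C(UnitCirc, ℂ)) :
    Integrable f (μ : Measure UnitCirc) :=
  f.continuous.integrable_of_hasCompactSupport (HasCompactSupport.of_compactSpace _)

lemma int_fourier_eq (ν : MSp) {n : ℕ} {μ : MSp} (hμ : μ ∈ Fset n (covCoeff ν))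
    (m : ℤ) (hm : m.natAbs ≤ n) :
    ∫ θ, fourier m θ ∂(μ : Measure UnitCirc) = ∫ θ, fourier m θ ∂(ν : Measure UnitCirc) := by
  have h := hμ m.natAbs hm
  rw [covCoeff, covCoeff] at h
  have hne : ((2 * Real.pi : ℝ) : ℂ)⁻¹ ≠ 0 := by
    simp [Real.pi_ne_zero]
  have h2 : ∫ θ, fourier (-(m.natAbs : ℤ)) θ ∂(μ : Measure UnitCirc)
      = ∫ θ, fourier (-(m.natAbs : ℤ)) θ ∂(ν : Measure UnitCirc) :=
    mul_left_cancel₀ hne h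
  rcases le_or_gt m 0 with hm0 | hm0
  · rwa [Int.ofNat_natAbs_of_nonpos hm0, neg_neg] at h2
  · rw [Int.natAbs_of_nonneg hm0.le] at h2
    have key : ∀ (ρ : MSp), ∫ θ, fourier m θ ∂(ρ : Measure UnitCirc)
        = conj (∫ θ, fourier (-m) θ ∂(ρ : Measure UnitCirc)) := by
      intro ρ
      rw [← integral_conj]
      simp_rw [← fourier_neg, neg_neg]
    rw [key μ, key ν, h2]

lemma mass_eq (ν : MSp) {n : ℕ} {μ : MSp} (hμ : μ ∈ Fset n (covCoeff ν)) :
    ((μ : Measure UnitCirc) Set.univ).toReal = ((ν : Measure UnitCirc) Set.univ).toReal := by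
  have h := int_fourier_eq ν hμ 0 (Nat.zero_le n)
  simp only [fourier_zero, integral_const, Complex.real_smul, mul_one] at h
  exact_mod_cast h

/-- For any continuous test function `g` on `𝕋`, the range of possible
values of `∫ g dμ` over `μ ∈ F_{c_{0:n}}` shrinks to zero as `n → ∞`. -/
theorem stmt16 (ν : MSp) (g : C(UnitCirc, ℝ)) :
    Tendsto (fun n =>
        sSup {d : ℝ | ∃ μ0 ∈ Fset n (covCoeff ν), ∃ μ1 ∈ Fset n (covCoeff ν),
          d = |(∫ θ, g θ ∂(μ0 : Measure UnitCirc)) - ∫ θ, g θ ∂(μ1 : Measure UnitCirc)|})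
      atTop (nhds 0) := by
  set massR := ((ν : Measure UnitCirc) Set.univ).toReal with hmassdef
  have hmass0 : 0 ≤ massR := ENNReal.toReal_nonneg
  rw [Metric.tendsto_atTop]
  intro ε hε
  set ε' := ε / (4 * (massR + 1)) with hε'def
  have hε'pos : 0 < ε' := by positivity
  set gc : C(UnitCirc, ℂ) := ⟨fun θ => (g θ : ℂ), by continuity⟩ with hgcdef
  have h1 : gc ∈ (Submodule.span ℂ
      (Set.range (@fourier (2 * Real.pi)))).topologicalClosure := by
    rw [span_fourier_closure_eq_top]; exact Submodule.mem_top
  have hdense : gc ∈ closure ((Submodule.span ℂ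
      (Set.range (@fourier (2 * Real.pi)))) : Set C(UnitCirc, ℂ)) := h1
  obtain ⟨p, hp_mem, hp_close⟩ := Metric.mem_closure_iff.mp hdense ε' hε'pos
  obtain ⟨c, hc⟩ := Finsupp.mem_span_range_iff_exists_finsupp.mp hp_mem
  set N := c.support.sup (fun m => m.natAbs) with hNdef
  refine ⟨N, fun n hn => ?_⟩
  -- integrals of p agree on Fset n
  have key : ∀ μ ∈ Fset n (covCoeff ν),
      ∫ θ, p θ ∂(μ : Measure UnitCirc) = ∫ θ, p θ ∂(ν : Measure UnitCirc) := by
    intro μ hμ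
    rw [← hc]
    simp only [Finsupp.sum, ContinuousMap.coe_sum, Finset.sum_apply,
      ContinuousMap.coe_smul, Pi.smul_apply]
    rw [integral_finset_sum, integral_finset_sum]
    · refine Finset.sum_congr rfl fun m hm => ?_
      rw [integral_smul, integral_smul,
        int_fourier_eq ν hμ m (le_trans (Finset.le_sup hm) hn)]
    · exact fun m _ => (cont_integrable ν (fourier m)).smul (c m)
    · exact fun m _ => (cont_integrable μ (fourier m)).smul (c m)
  -- norm bound on gc - p against any μ in Fset n
  have hnorm : ‖gc - p‖ ≤ ε' := by
    rw [← dist_eq_norm]; exact hp_close.le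
  have hbd : ∀ μ ∈ Fset n (covCoeff ν),
      ‖(∫ θ, gc θ ∂(μ : Measure UnitCirc)) - ∫ θ, p θ ∂(μ : Measure UnitCirc)‖
        ≤ ε' * massR := by
    intro μ hμ
    rw [← integral_sub (cont_integrable μ gc) (cont_integrable μ p)]
    calc ‖∫ θ, (gc θ - p θ) ∂(μ : Measure UnitCirc)‖
        ≤ ε' * ((μ : Measure UnitCirc) Set.univ).toReal := by
          apply norm_integral_le_of_norm_le_const
          filter_upwards with θ
          calc ‖gc θ - p θ‖ = ‖(gc - p) θ‖ := by simp
            _ ≤ ‖gc - p‖ := ContinuousMap.norm_coe_le_norm _ θ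
            _ ≤ ε' := hnorm
      _ = ε' * massR := by rw [mass_eq ν hμ]
  -- real integral as complex
  have hreal : ∀ μ : MSp, Complex.ofReal (∫ θ, g θ ∂(μ : Measure UnitCirc))
      = ∫ θ, gc θ ∂(μ : Measure UnitCirc) := by
    intro μ
    simp only [hgcdef, ContinuousMap.coe_mk]
    exact (integral_ofReal).symm
  -- elements of the set are bounded
  have hub : ∀ d ∈ {d : ℝ | ∃ μ0 ∈ Fset n (covCoeff ν), ∃ μ1 ∈ Fset n (covCoeff ν),
      d = |(∫ θ, g θ ∂(μ0 : Measure UnitCirc)) - ∫ θ, g θ ∂(μ1 : Measure UnitCirc)|},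
      d ≤ ε' * (2 * massR) := by
    rintro d ⟨μ0, hμ0, μ1, hμ1, rfl⟩
    have : |(∫ θ, g θ ∂(μ0 : Measure UnitCirc)) - ∫ θ, g θ ∂(μ1 : Measure UnitCirc)|
        = ‖(∫ θ, gc θ ∂(μ0 : Measure UnitCirc)) - ∫ θ, gc θ ∂(μ1 : Measure UnitCirc)‖ := by
      rw [← Real.norm_eq_abs, ← Complex.norm_real, Complex.ofReal_sub, hreal μ0, hreal μ1]
    rw [this]
    have heq : (∫ θ, gc θ ∂(μ0 : Measure UnitCirc)) - ∫ θ, gc θ ∂(μ1 : Measure UnitCirc)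
        = ((∫ θ, gc θ ∂(μ0 : Measure UnitCirc)) - ∫ θ, p θ ∂(μ0 : Measure UnitCirc))
          - ((∫ θ, gc θ ∂(μ1 : Measure UnitCirc)) - ∫ θ, p θ ∂(μ1 : Measure UnitCirc)) := by
      rw [key μ0 hμ0, key μ1 hμ1]; ring
    rw [heq]
    calc _ ≤ ‖(∫ θ, gc θ ∂(μ0 : Measure UnitCirc)) - ∫ θ, p θ ∂(μ0 : Measure UnitCirc)‖
          + ‖(∫ θ, gc θ ∂(μ1 : Measure UnitCirc)) - ∫ θ, p θ ∂(μ1 : Measure UnitCirc)‖ :=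
        norm_sub_le _ _
      _ ≤ ε' * massR + ε' * massR := add_le_add (hbd μ0 hμ0) (hbd μ1 hμ1)
      _ = ε' * (2 * massR) := by ring
  have h0mem : (0 : ℝ) ∈ {d : ℝ | ∃ μ0 ∈ Fset n (covCoeff ν), ∃ μ1 ∈ Fset n (covCoeff ν),
      d = |(∫ θ, g θ ∂(μ0 : Measure UnitCirc)) - ∫ θ, g θ ∂(μ1 : Measure UnitCirc)|} :=
    ⟨ν, fun k _ => rfl, ν, fun k _ => rfl, by simp⟩
  have hbdd : BddAbove {d : ℝ | ∃ μ0 ∈ Fset n (covCoeff ν), ∃ μ1 ∈ Fset n (covCoeff ν),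
      d = |(∫ θ, g θ ∂(μ0 : Measure UnitCirc)) - ∫ θ, g θ ∂(μ1 : Measure UnitCirc)|} :=
    ⟨ε' * (2 * massR), hub⟩
  have hsup_le : sSup {d : ℝ | ∃ μ0 ∈ Fset n (covCoeff ν), ∃ μ1 ∈ Fset n (covCoeff ν),
      d = |(∫ θ, g θ ∂(μ0 : Measure UnitCirc)) - ∫ θ, g θ ∂(μ1 : Measure UnitCirc)|}
      ≤ ε' * (2 * massR) :=
    Real.sSup_le hub (by positivity)
  have hsup_nonneg : (0:ℝ) ≤ sSup {d : ℝ | ∃ μ0 ∈ Fset n (covCoeff ν), ∃ μ1 ∈ Fset n (covCoeff ν),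
      d = |(∫ θ, g θ ∂(μ0 : Measure UnitCirc)) - ∫ θ, g θ ∂(μ1 : Measure UnitCirc)|} :=
    le_csSup hbdd h0mem
  have hBlt : ε' * (2 * massR) < ε := by
    rw [hε'def, div_mul_eq_mul_div, div_lt_iff₀ (by positivity)]
    nlinarith
  rw [Real.dist_eq, sub_zero, _root_.abs_of_nonneg hsup_nonneg]
  exact lt_of_le_of_lt hsup_le hBlt

end
end
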